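/- In the step-by-step oracle construction of Theorem 3 (circuit height bound): for each k ≥ 0 there exist partial functions f_0 ⊆ f_1 ⊆ ⋯ ⊆ f_d with f_0 the totally undefined function, such that f_k is k-sequential and |dom f_k| is at most the total number of oracle queries made at rounds strictly below k, provided the total number of queries is less than 2^n. In particular the empty partial function is 0-sequential. -/
import Mathlib


/-- Length-`n` bit strings. -/
abbrev Str (n : ℕ) := Fin n → Bool

/-- The all-zero string `0^n`. -/
def zeroStr (n : ℕ) : Str n := fun _ => false

/-- Chain of iterates of `f` starting at `0^n`, defined up to index `k`. -/
def PChain {n : ℕ} (f : Str n → Option (Str n)) (seq : ℕ → Str n) (k : ℕ) : Prop :=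
  seq 0 = zeroStr n ∧ ∀ i < k, f (seq i) = some (seq (i + 1))

/-- `f` is k-sequential: for some `j ≤ k` the iterates `0^n, f(0^n), …, f^j(0^n)` are
defined but `f^j(0^n) ∉ dom f`. -/
def PSequential {n : ℕ} (f : Str n → Option (Str n)) (k : ℕ) : Prop :=
  ∃ j ≤ k, ∃ seq : ℕ → Str n, PChain f seq j ∧ f (seq j) = none

noncomputable def extFun {n : ℕ} (f : Str n → Option (Str n)) (M : Finset (Str n)) :
    Str n → Option (Str n) :=
  if hy : ∃ y : Str n, f y = none ∧ y ∉ M then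
    fun x => if f x ≠ none then f x else if x ∈ M then some hy.choose else none
  else f

lemma extFun_ext {n : ℕ} (f : Str n → Option (Str n)) (M : Finset (Str n)) :
    ∀ x, f x ≠ none → extFun f M x = f x := by
  intro x hx
  unfold extFun
  split
  · simp [hx]
  · rfl

lemma extFun_key {n : ℕ} (f : Str n → Option (Str n)) (M : Finset (Str n))
    (hcard : ({x | f x ≠ none} ∪ ↑M : Set (Str n)).ncard < 2 ^ n) :
    ({x | extFun f M x ≠ none} = {x | f x ≠ none} ∪ ↑M) ∧
    (∀ k, PSequential f k → PSequential (extFun f M) (k + 1)) := by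
  have hy : ∃ y : Str n, f y = none ∧ y ∉ M := by
    by_contra h
    push_neg at h
    have huniv : ({x | f x ≠ none} ∪ ↑M : Set (Str n)) = Set.univ := by
      ext x
      simp only [Set.mem_union, Set.mem_setOf_eq, Finset.coe_sort_coe, Set.mem_univ, iff_true,
        Finset.mem_coe]
      by_cases hfx : f x = none
      · exact Or.inr (h x hfx)
      · exact Or.inl hfx
    rw [huniv, Set.ncard_univ] at hcard
    have : Nat.card (Str n) = 2 ^ n := by
      simp [Nat.card_eq_fintype_card]
    omega
  obtain ⟨hfy, hyM⟩ := hy.choose_spec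
  set y := hy.choose with hydef
  have hext : extFun f M = fun x => if f x ≠ none then f x else if x ∈ M then some y else none :=
    dif_pos hy
  constructor
  · ext x
    rw [hext]
    simp only [Set.mem_setOf_eq, Set.mem_union, Finset.mem_coe]
    by_cases hfx : f x = none
    · by_cases hxM : x ∈ M <;> simp [hfx, hxM]
    · simp [hfx]
  · rintro k ⟨j, hjk, seq, ⟨h0, hchain⟩, hend⟩
    have hchain' : ∀ i < j, extFun f M (seq i) = some (seq (i + 1)) := by
      intro i hi
      rw [extFun_ext f M (seq i) (by rw [hchain i hi]; simp)]
      exact hchain i hi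
    by_cases hM : seq j ∈ M
    · refine ⟨j + 1, by omega, fun i => if i ≤ j then seq i else y, ⟨by simp [h0], ?_⟩, ?_⟩
      · intro i hi
        rcases lt_or_eq_of_le (Nat.lt_succ_iff.mp hi) with hij | hij
        · have h1 : i ≤ j := hij.le
          have h2 : i + 1 ≤ j := hij
          simp only [h1, h2, if_pos]
          exact hchain' i hij
        · subst hij
          simp only [le_refl, if_pos, if_neg (by omega : ¬ i + 1 ≤ i)]
          rw [hext]
          simp [hend, hM]
      · simp only [if_neg (by omega : ¬ j + 1 ≤ j)]
        rw [hext]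
        simp [hfy, hyM]
    · exact ⟨j, by omega, seq, ⟨h0, hchain'⟩, by rw [hext]; simp [hend, hM]⟩

noncomputable def Fiter {n : ℕ} (d : ℕ) (M : ℕ → Finset (Str n)) : ℕ → Str n → Option (Str n)
  | 0 => fun _ => none
  | k + 1 => if k < d then extFun (Fiter d M k) (M k) else Fiter d M k

lemma Fiter_succ {n : ℕ} (d : ℕ) (M : ℕ → Finset (Str n)) (k : ℕ) :
    Fiter d M (k + 1) = if k < d then extFun (Fiter d M k) (M k) else Fiter d M k := rfl

/-- the step-by-step oracle construction of the circuit height bound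
theorem.  Given the sets `M k` of strings queried at round `k`, with fewer than `2^n`
queries in total, there is a chain `f_0 ⊆ f_1 ⊆ ⋯` of partial functions with `f_0`
totally undefined (and 0-sequential), `dom f_{k+1} = dom f_k ∪ M k`, such that each
`f_k` is k-sequential and `|dom f_k|` is at most the number of queries at rounds
strictly below `k`. -/
theorem stmt6 (n d : ℕ) (M : ℕ → Finset (Str n))
    (htotal : (∑ j ∈ Finset.range d, (M j).card) < 2 ^ n) :
    ∃ F : ℕ → (Str n → Option (Str n)),
      (F 0 = fun _ => none) ∧ PSequential (F 0) 0 ∧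
      (∀ k, ∀ x, F k x ≠ none → F (k + 1) x = F k x) ∧
      (∀ k < d, {x | F (k + 1) x ≠ none} = {x | F k x ≠ none} ∪ ↑(M k)) ∧
      (∀ k ≤ d, PSequential (F k) k ∧
        {x | F k x ≠ none}.ncard ≤ ∑ j ∈ Finset.range k, (M j).card) := by
  refine ⟨Fiter d M, rfl, ?_, ?_, ?_, ?_⟩
  · exact ⟨0, le_refl 0, fun _ => zeroStr n, ⟨rfl, by omega⟩, rfl⟩
  · intro k x hx
    rw [Fiter_succ]
    split
    · exact extFun_ext _ _ x hx
    · rfl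
  all_goals {
    have inv : ∀ k ≤ d, PSequential (Fiter d M k) k ∧
        {x | Fiter d M k x ≠ none}.ncard ≤ ∑ j ∈ Finset.range k, (M j).card := by
      intro k
      induction k with
      | zero =>
        intro _
        refine ⟨⟨0, le_refl 0, fun _ => zeroStr n, ⟨rfl, by omega⟩, rfl⟩, ?_⟩
        simp [Fiter]
      | succ k ih =>
        intro hk
        have hkd : k < d := hk
        obtain ⟨hseq, hcard⟩ := ih (by omega)
        have hcard2 : ({x | Fiter d M k x ≠ none} ∪ ↑(M k) : Set (Str n)).ncard < 2 ^ n := by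
          have h1 := Set.ncard_union_le {x | Fiter d M k x ≠ none} (↑(M k) : Set (Str n))
          rw [Set.ncard_coe_finset] at h1
          have h2 : (∑ j ∈ Finset.range (k + 1), (M j).card) ≤
              ∑ j ∈ Finset.range d, (M j).card :=
            Finset.sum_le_sum_of_subset (Finset.range_subset_range.mpr hk)
          rw [Finset.sum_range_succ] at h2
          omega
        obtain ⟨hdom, hps⟩ := extFun_key (Fiter d M k) (M k) hcard2
        have hstep : Fiter d M (k + 1) = extFun (Fiter d M k) (M k) := by
          rw [Fiter_succ, if_pos hkd]
        constructor
        · rw [hstep]; exact hps k hseq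
        · rw [hstep, hdom]
          have h1 := Set.ncard_union_le {x | Fiter d M k x ≠ none} (↑(M k) : Set (Str n))
          rw [Set.ncard_coe_finset] at h1
          rw [Finset.sum_range_succ]
          omega
    first
    | exact inv
    | (intro k hk
       obtain ⟨hseq, hcard⟩ := (inv k hk.le)
       have hcard2 : ({x | Fiter d M k x ≠ none} ∪ ↑(M k) : Set (Str n)).ncard < 2 ^ n := by
          have h1 := Set.ncard_union_le {x | Fiter d M k x ≠ none} (↑(M k) : Set (Str n))
          rw [Set.ncard_coe_finset] at h1
          have h2 : (∑ j ∈ Finset.range (k + 1), (M j).card) ≤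
              ∑ j ∈ Finset.range d, (M j).card :=
            Finset.sum_le_sum_of_subset (Finset.range_subset_range.mpr hk)
          rw [Finset.sum_range_succ] at h2
          omega
       have hstep : Fiter d M (k + 1) = extFun (Fiter d M k) (M k) := by
          rw [Fiter_succ, if_pos hk]
       rw [hstep]
       exact (extFun_key (Fiter d M k) (M k) hcard2).1)
  }
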